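/- Let d ≥ 1, let φ ∈ Φ_d be such that the map h ↦ φ(‖h‖) is twice continuously differentiable on ℝ^d, and let u be a unit vector in ℝ^d. Then the function D : ℝ^d → ℝ defined by D(h) = − cos²θ(h,u) · φ''(‖h‖) − sin²θ(h,u) · φ'(‖h‖)/‖h‖ for h ≠ 0, and D(0) = −φ''(0), is a stationary covariance function on ℝ^d (it is the covariance function of the directional derivative in direction u of a random field with isotropic covariance φ). -/

import Mathlib

open MeasureTheory
open scoped BigOperators RealInnerProductSpace

noncomputable section

/-- A function `C : ℝ^d → ℝ` is a stationary covariance function if it is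
positive semidefinite. -/
def IsStationaryCovariance (d : ℕ) (C : EuclideanSpace ℝ (Fin d) → ℝ) : Prop :=
  ∀ (n : ℕ) (x : Fin n → EuclideanSpace ℝ (Fin d)) (v : Fin n → ℝ),
    0 ≤ ∑ i, ∑ j, v i * v j * C (x i - x j)

/-- `φ : [0,∞) → ℝ` belongs to the class `Φ_d`. -/
def MemPhi (d : ℕ) (φ : ℝ → ℝ) : Prop :=
  ContinuousOn φ (Set.Ici 0) ∧ IsStationaryCovariance d (fun h => φ ‖h‖)

/-- `f` is a `d`-radial spectral density of `φ`. -/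
def IsRadialSpectralDensity (d : ℕ) (φ f : ℝ → ℝ) : Prop :=
  (∀ u : ℝ, 0 ≤ u → 0 ≤ f u) ∧
  MeasureTheory.Integrable (fun ω : EuclideanSpace ℝ (Fin d) => f ‖ω‖) ∧
  ∀ h : EuclideanSpace ℝ (Fin d),
    (φ ‖h‖ : ℂ) = ∫ ω : EuclideanSpace ℝ (Fin d),
      Complex.exp (Complex.I * ((⟪h, ω⟫ : ℝ) : ℂ)) * ((f ‖ω‖ : ℝ) : ℂ)

/-- The quadratic form `hᵀ A h`. -/
def quadForm {d : ℕ} (A : Matrix (Fin d) (Fin d) ℝ) (h : EuclideanSpace ℝ (Fin d)) : ℝ :=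
  ∑ i, ∑ j, h i * A i j * h j


/-!
Let `g_w(t) = φ ‖w + t u‖`. The chain rule (and, at `w = 0`, continuity of `φ''`) gives
`D w = -g_w''(0)`, so `D` is the pointwise limit, as `ε → 0`, of the second differences
`(2 φ ‖w‖ - φ ‖w + ε u‖ - φ ‖w - ε u‖) / ε²`. Each of these is positive semidefinite: it is the
quadratic form of `h ↦ φ ‖h‖` at the points `xᵢ` and `xᵢ + ε u` with weights `vᵢ` and `-vᵢ`.
Positive semidefiniteness passes to the limit.
-/

open Filter Topology Set

namespace IsStationaryCovariance

variable {d : ℕ} {C : EuclideanSpace ℝ (Fin d) → ℝ}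

theorem const_mul (hC : IsStationaryCovariance d C) {c : ℝ} (hc : 0 ≤ c) :
    IsStationaryCovariance d fun w => c * C w := by
  intro n x v
  have := mul_nonneg hc (hC n x v)
  simpa only [Finset.mul_sum, mul_left_comm c] using this

theorem second_difference (hC : IsStationaryCovariance d C) (a : EuclideanSpace ℝ (Fin d)) :
    IsStationaryCovariance d fun w => 2 * C w - C (w + a) - C (w - a) := by
  intro n x v
  have S := hC (n + n) (Fin.append x fun i => x i + a) (Fin.append v fun i => -v i)
  simp only [Fin.sum_univ_add, Fin.append_left, Fin.append_right, ← Finset.sum_add_distrib] at S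
  refine S.trans_eq (Finset.sum_congr rfl fun i _ => Finset.sum_congr rfl fun j _ => ?_)
  rw [show x i - (x j + a) = x i - x j - a by abel, show x i + a - x j = x i - x j + a by abel,
    show x i + a - (x j + a) = x i - x j by abel]
  ring

theorem of_tendsto {ι : Type*} {l : Filter ι} [l.NeBot] {C : ι → EuclideanSpace ℝ (Fin d) → ℝ}
    {D : EuclideanSpace ℝ (Fin d) → ℝ} (hC : ∀ᶠ i in l, IsStationaryCovariance d (C i))
    (hD : ∀ w, Tendsto (fun i => C i w) l (𝓝 (D w))) : IsStationaryCovariance d D := by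
  intro n x v
  refine ge_of_tendsto (tendsto_finsetSum _ fun i _ => tendsto_finsetSum _ fun j _ =>
    (hD (x i - x j)).const_mul (v i * v j)) ?_
  filter_upwards [hC] with i hi using hi n x v

end IsStationaryCovariance

theorem HasDerivAt.tendsto_symmetric_slope {f : ℝ → ℝ} {f' x : ℝ} (hf : HasDerivAt f f' x) :
    Tendsto (fun ε => (f (x + ε) - f (x - ε)) / (2 * ε)) (𝓝[≠] 0) (𝓝 f') := by
  have hslope := hasDerivAt_iff_tendsto_slope_zero.mp hf
  have hneg : Tendsto (fun ε : ℝ => -ε) (𝓝[≠] 0) (𝓝[≠] 0) :=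
    tendsto_nhdsWithin_of_tendsto_nhds_of_eventually_within _
      (by simpa using (continuous_neg.tendsto (0 : ℝ)).mono_left nhdsWithin_le_nhds)
      (eventually_nhdsWithin_of_forall fun ε hε => neg_ne_zero.mpr hε)
  have := (hslope.add (hslope.comp hneg)).div_const 2
  rw [add_self_div_two] at this
  refine this.congr fun ε => ?_
  simp only [Function.comp_apply, smul_eq_mul, ← sub_eq_add_neg]
  rw [inv_neg]
  ring

theorem ContDiff.tendsto_second_difference {g : ℝ → ℝ} (hg : ContDiff ℝ 2 g) (x : ℝ) :
    Tendsto (fun ε => (g (x + ε) + g (x - ε) - 2 * g x) / ε ^ 2) (𝓝[≠] 0)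
      (𝓝 (deriv (deriv g) x)) := by
  have hg : ContDiff ℝ (1 + 1) g := hg
  obtain ⟨hg₁, -, hg'⟩ := contDiff_succ_iff_deriv.mp hg
  have hg₂ : Differentiable ℝ (deriv g) := hg'.differentiable one_ne_zero
  refine HasDerivAt.lhopital_zero_nhdsNE (f' := fun ε => deriv g (x + ε) - deriv g (x - ε))
    (g' := fun ε => 2 * ε) (Eventually.of_forall fun ε => ?_)
    (Eventually.of_forall fun ε => by simpa using hasDerivAt_pow 2 ε)
    (by filter_upwards [self_mem_nhdsWithin] with ε hε using mul_ne_zero two_ne_zero hε)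
    ?_ ?_ (hg₂ x).hasDerivAt.tendsto_symmetric_slope
  · have hplus := (hg₁ (x + ε)).hasDerivAt.comp_const_add x ε
    have hminus := (hg₁ (x - ε)).hasDerivAt.comp_const_sub x ε
    simpa [sub_eq_add_neg] using (hplus.add hminus).sub_const (2 * g x)
  · refine tendsto_nhdsWithin_of_tendsto_nhds ?_
    have : Continuous fun ε => g (x + ε) + g (x - ε) - 2 * g x := by fun_prop
    simpa [two_mul] using this.tendsto 0
  · exact tendsto_nhdsWithin_of_tendsto_nhds (by simpa using (continuous_pow 2).tendsto (0 : ℝ))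

theorem deriv_deriv_eq_of_eqOn_Ioi {g φ φ' φ'' : ℝ → ℝ} {a : ℝ} (hg : ContDiff ℝ 2 g)
    (hgφ : EqOn g φ (Ioi a)) (hφ' : ∀ t ∈ Ioi a, HasDerivAt φ (φ' t) t)
    (hφ'' : ∀ t ∈ Ioi a, HasDerivAt φ' (φ'' t) t) (hcont : ContinuousWithinAt φ'' (Ioi a) a) :
    deriv (deriv g) a = φ'' a := by
  have hg' : EqOn (deriv g) φ' (Ioi a) := fun t ht => by
    rw [(hgφ.eventuallyEq_of_mem (isOpen_Ioi.mem_nhds ht)).deriv_eq, (hφ' t ht).deriv]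
  have hg'' : EqOn (deriv (deriv g)) φ'' (Ioi a) := fun t ht => by
    rw [(hg'.eventuallyEq_of_mem (isOpen_Ioi.mem_nhds ht)).deriv_eq, (hφ'' t ht).deriv]
  have hg : ContDiff ℝ (1 + 1) g := hg
  obtain ⟨-, -, hg₁⟩ := contDiff_succ_iff_deriv.mp hg
  refine tendsto_nhds_unique ((hg₁.continuous_deriv le_rfl).continuousWithinAt (s := Ioi a)) ?_
  exact Tendsto.congr' (eventually_nhdsWithin_of_forall fun t ht => (hg'' ht).symm) hcont

section Radial

variable {F : Type*} [NormedAddCommGroup F] [InnerProductSpace ℝ F]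

theorem HasDerivAt.norm {f : ℝ → F} {f' : F} {t : ℝ} (hf : HasDerivAt f f' t) (h0 : f t ≠ 0) :
    HasDerivAt (fun s => ‖f s‖) (⟪f t, f'⟫ / ‖f t‖) t := by
  have := hf.norm_sq.sqrt (by positivity)
  simp only [Real.sqrt_sq (norm_nonneg _)] at this
  convert this using 1
  ring

theorem deriv_deriv_comp_norm_add_smul {φ φ' φ'' : ℝ → ℝ}
    (hφ' : ∀ t ∈ Ioi 0, HasDerivAt φ (φ' t) t) (hφ'' : ∀ t ∈ Ioi 0, HasDerivAt φ' (φ'' t) t)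
    {h u : F} (hu : ‖u‖ = 1) (hh : h ≠ 0) :
    deriv (deriv fun t : ℝ => φ ‖h + t • u‖) 0 =
      (⟪h, u⟫ / ‖h‖) ^ 2 * φ'' ‖h‖ + (1 - (⟪h, u⟫ / ‖h‖) ^ 2) * (φ' ‖h‖ / ‖h‖) := by
  set c : ℝ → F := fun t => h + t • u
  have hc : ∀ t, HasDerivAt c u t := fun t =>
    (((hasDerivAt_id t).smul_const u).const_add h).congr_deriv (one_smul ℝ u)
  have hc0 : c 0 = h := by simp [c]
  have hc0_ne : c 0 ≠ 0 := by rwa [hc0]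
  have hnorm : ∀ t, c t ≠ 0 → HasDerivAt (fun s => ‖c s‖) (⟪c t, u⟫ / ‖c t‖) t :=
    fun t ht => (hc t).norm ht
  have hderiv : deriv (fun t => φ ‖c t‖) =ᶠ[𝓝 0] fun t => φ' ‖c t‖ * (⟪c t, u⟫ / ‖c t‖) := by
    filter_upwards [(hc 0).continuousAt.eventually_ne hc0_ne] with t ht
    exact ((hφ' _ (norm_pos_iff.mpr ht)).comp t (hnorm t ht)).deriv
  have hr : 0 < ‖c 0‖ := norm_pos_iff.mpr hc0_ne
  have hψ := ((hφ'' _ hr).comp 0 (hnorm 0 hc0_ne)).mul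
    (((hc 0).inner ℝ (hasDerivAt_const 0 u)).div (hnorm 0 hc0_ne) hr.ne')
  rw [hderiv.deriv_eq]
  refine hψ.deriv.trans ?_
  simp only [Pi.div_apply, Function.comp_apply, hc0, inner_zero_right, zero_add,
    real_inner_self_eq_norm_sq, hu]
  field_simp

end Radial

theorem statement_10_general (d : ℕ) (φ φ' φ'' : ℝ → ℝ)
    (hφ : MemPhi d φ)
    (hsmooth : ContDiff ℝ 2 (fun h : EuclideanSpace ℝ (Fin d) => φ ‖h‖))
    (hderiv1 : ∀ t ∈ Set.Ioi (0 : ℝ), HasDerivAt φ (φ' t) t)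
    (hderiv2 : ∀ t ∈ Set.Ioi (0 : ℝ), HasDerivAt φ' (φ'' t) t)
    (hcont2 : ContinuousOn φ'' (Set.Ici 0))
    (u : EuclideanSpace ℝ (Fin d)) (hu : ‖u‖ = 1)
    (D : EuclideanSpace ℝ (Fin d) → ℝ)
    (hD0 : D 0 = -φ'' 0)
    (hD : ∀ h : EuclideanSpace ℝ (Fin d), h ≠ 0 →
      D h = -(((⟪h, u⟫ : ℝ) / ‖h‖) ^ 2) * φ'' ‖h‖ -
        (1 - ((⟪h, u⟫ : ℝ) / ‖h‖) ^ 2) * (φ' ‖h‖ / ‖h‖)) :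
    IsStationaryCovariance d D := by
  have hline : ∀ w, ContDiff ℝ 2 fun t : ℝ => φ ‖w + t • u‖ := fun w =>
    hsmooth.comp (contDiff_const.add (contDiff_id.smul contDiff_const))
  have hD_eq : ∀ w, D w = -deriv (deriv fun t : ℝ => φ ‖w + t • u‖) 0 := by
    intro w
    rcases eq_or_ne w 0 with rfl | hw
    · have hφ'' : ContinuousWithinAt φ'' (Ioi 0) 0 :=
        (hcont2 0 self_mem_Ici).mono Ioi_subset_Ici_self
      rw [hD0, deriv_deriv_eq_of_eqOn_Ioi (hline 0) (fun t (ht : 0 < t) => by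
        simp [norm_smul, hu, abs_of_pos ht]) hderiv1 hderiv2 hφ'']
    · rw [hD w hw, deriv_deriv_comp_norm_add_smul hderiv1 hderiv2 hu hw]
      ring
  refine IsStationaryCovariance.of_tendsto (l := 𝓝[≠] (0 : ℝ))
    (C := fun ε w => (ε ^ 2)⁻¹ * (2 * φ ‖w‖ - φ ‖w + ε • u‖ - φ ‖w - ε • u‖))
    (Eventually.of_forall fun ε => (hφ.2.second_difference (ε • u)).const_mul (by positivity))
    fun w => ?_
  rw [hD_eq]
  refine ((hline w).tendsto_second_difference 0).neg.congr fun ε => ?_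
  simp only [zero_add, zero_sub, zero_smul, add_zero, neg_smul, ← sub_eq_add_neg]
  ring

theorem statement_10 (d : ℕ) (hd : 1 ≤ d) (φ φ' φ'' : ℝ → ℝ)
    (hφ : MemPhi d φ)
    (hsmooth : ContDiff ℝ 2 (fun h : EuclideanSpace ℝ (Fin d) => φ ‖h‖))
    (hderiv1 : ∀ t ∈ Set.Ioi (0 : ℝ), HasDerivAt φ (φ' t) t)
    (hderiv2 : ∀ t ∈ Set.Ioi (0 : ℝ), HasDerivAt φ' (φ'' t) t)
    (hcont1 : ContinuousOn φ' (Set.Ici 0)) (hcont2 : ContinuousOn φ'' (Set.Ici 0))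
    (u : EuclideanSpace ℝ (Fin d)) (hu : ‖u‖ = 1)
    (D : EuclideanSpace ℝ (Fin d) → ℝ)
    (hD0 : D 0 = -φ'' 0)
    (hD : ∀ h : EuclideanSpace ℝ (Fin d), h ≠ 0 →
      D h = -(((⟪h, u⟫ : ℝ) / ‖h‖) ^ 2) * φ'' ‖h‖ -
        (1 - ((⟪h, u⟫ : ℝ) / ‖h‖) ^ 2) * (φ' ‖h‖ / ‖h‖)) :
    IsStationaryCovariance d D :=
  statement_10_general d φ φ' φ'' hφ hsmooth hderiv1 hderiv2 hcont2 u hu D hD0 hD
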